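/- arXiv:1106.5239 — 2 statements merged into one kernel-verified Lean document; each statement's English description precedes it below -/
import Mathlib

section
/- Let M be a prime quadratic module in M_n(R). If m₁ + m₂ ∈ M ∩ (−M) for some m₁, m₂ ∈ M, then m₁, m₂ ∈ M ∩ (−M). Moreover, if 2A ∈ M for some symmetric A, then A ∈ M. -/
open Matrix

/-- A quadratic module in `M_n(R)`. -/
def IsQM {n : ℕ} {R : Type*} [CommRing R] (M : Set (Matrix (Fin n) (Fin n) R)) : Prop :=
  (∀ A ∈ M, A.IsSymm) ∧ (1 : Matrix (Fin n) (Fin n) R) ∈ M ∧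
  (∀ a ∈ M, ∀ b ∈ M, a + b ∈ M) ∧
  ∀ (A : Matrix (Fin n) (Fin n) R), ∀ m ∈ M, Aᵀ * m * A ∈ M

/-- A prime quadratic module in `M_n(R)`: proper, and `r² • A ∈ M` for symmetric `A`
implies `A ∈ M` or `r·I_n ∈ M ∩ (−M)`. -/
def IsPrimeQM {n : ℕ} {R : Type*} [CommRing R] (M : Set (Matrix (Fin n) (Fin n) R)) : Prop :=
  IsQM M ∧ -(1 : Matrix (Fin n) (Fin n) R) ∉ M ∧
  ∀ (A : Matrix (Fin n) (Fin n) R) (r : R), A.IsSymm → r ^ 2 • A ∈ M →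
    A ∈ M ∨ r • (1 : Matrix (Fin n) (Fin n) R) ∈ M ∩ (-M)

namespace IsQM

variable {n : ℕ} {R : Type*} [CommRing R] {M : Set (Matrix (Fin n) (Fin n) R)}

theorem one_mem (hM : IsQM M) : (1 : Matrix (Fin n) (Fin n) R) ∈ M := hM.2.1

theorem add_mem (hM : IsQM M) {a b : Matrix (Fin n) (Fin n) R} (ha : a ∈ M) (hb : b ∈ M) :
    a + b ∈ M :=
  hM.2.2.1 a ha b hb

theorem mem_support_of_add_mem_support (hM : IsQM M) {m₁ m₂ : Matrix (Fin n) (Fin n) R}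
    (h₁ : m₁ ∈ M) (h₂ : m₂ ∈ M) (h : m₁ + m₂ ∈ M ∩ -M) : m₁ ∈ M ∩ -M := by
  refine ⟨h₁, ?_⟩
  rw [Set.mem_neg]
  convert hM.add_mem h₂ h.2 using 1
  abel

theorem two_smul_one_notMem_support (hM : IsQM M) (hproper : -(1 : Matrix (Fin n) (Fin n) R) ∉ M) :
    (2 : R) • (1 : Matrix (Fin n) (Fin n) R) ∉ M ∩ -M := by
  rintro ⟨-, hneg⟩
  apply hproper
  have : 1 + -((2 : R) • 1) ∈ M := hM.add_mem hM.one_mem hneg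
  rwa [two_smul, neg_add, add_neg_cancel_left] at this

end IsQM

theorem IsPrimeQM.mem_of_two_smul_mem {n : ℕ} {R : Type*} [CommRing R]
    {M : Set (Matrix (Fin n) (Fin n) R)} (hM : IsPrimeQM M) {A : Matrix (Fin n) (Fin n) R}
    (hA : A.IsSymm) (h2A : (2 : R) • A ∈ M) : A ∈ M := by
  obtain ⟨hQM, hproper, hprime⟩ := hM
  have h4A : (2 : R) ^ 2 • A ∈ M := by
    rw [sq, mul_smul, two_smul R ((2 : R) • A)]
    exact hQM.add_mem h2A h2A
  exact (hprime A 2 hA h4A).resolve_right (hQM.two_smul_one_notMem_support hproper)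

theorem stmt8_general {n : ℕ} {R : Type*} [CommRing R]
    (M : Set (Matrix (Fin n) (Fin n) R)) (hM : IsPrimeQM M) :
    (∀ m₁ ∈ M, ∀ m₂ ∈ M, m₁ + m₂ ∈ M ∩ (-M) → m₁ ∈ M ∩ (-M) ∧ m₂ ∈ M ∩ (-M)) ∧
      ∀ A : Matrix (Fin n) (Fin n) R, A.IsSymm → (2 : R) • A ∈ M → A ∈ M := by
  refine ⟨fun m₁ h₁ m₂ h₂ hsum => ⟨?_, ?_⟩, fun A hA h2A => hM.mem_of_two_smul_mem hA h2A⟩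
  · exact hM.1.mem_support_of_add_mem_support h₁ h₂ hsum
  · exact hM.1.mem_support_of_add_mem_support h₂ h₁ (add_comm m₁ m₂ ▸ hsum)

theorem stmt8 {n : ℕ} [NeZero n] {R : Type*} [CommRing R]
    (M : Set (Matrix (Fin n) (Fin n) R)) (hM : IsPrimeQM M) :
    (∀ m₁ ∈ M, ∀ m₂ ∈ M, m₁ + m₂ ∈ M ∩ (-M) → m₁ ∈ M ∩ (-M) ∧ m₂ ∈ M ∩ (-M)) ∧
      ∀ A : Matrix (Fin n) (Fin n) R, A.IsSymm → (2 : R) • A ∈ M → A ∈ M :=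
  stmt8_general M hM
end

section
/- If N is a prime quadratic module in a commutative unital ring R, then ind(N) = {A symmetric in M_n(R) : v^T A v ∈ N for all v ∈ R^n} is a prime quadratic module in M_n(R), and it is the unique prime quadratic module in M_n(R) whose intersection with R·I_n equals N·I_n. -/
/-!
`ind N` is a quadratic module because the conditions `vᵀ A v ∈ N` are stable under sums and
congruences `A ↦ Tᵀ A T`; it is prime because `vᵀ (r² A) v = (vᵀ A v) r²` and `N` is prime.

Let `M` be prime with `M ∩ R·1 = N·1`. Summing the congruences of `A ∈ M` by the matrices
`v eᵢᵀ` gives `(vᵀ A v) • 1`, so `M ⊆ ind N`. Conversely `M` contains every `r • w wᵀ` with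
`r ∈ N`. For `A ∈ ind N` with `a = A i i` and `-a ∉ N`, we have
`a² A = a (a A - Aᵢ Aᵢᵀ) + a Aᵢ Aᵢᵀ`, where the first summand is a congruence of `A` whose
`i`-th row vanishes; by induction on the set of nonzero rows it lies in `M`, and primeness
of `M` gives `A ∈ M`. If instead `-A i i ∈ N` for all `i`, polarization writes `8 A` as a
sum of such rank-one terms, so `4² A ∈ M`, and `-4 ∉ N` lets primeness conclude again.
-/

open Matrix

/-- A quadratic module in a commutative ring `R`. -/
def IsQMR {R : Type*} [CommRing R] (M : Set R) : Prop :=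
  1 ∈ M ∧ (∀ a ∈ M, ∀ b ∈ M, a + b ∈ M) ∧ ∀ r : R, ∀ m ∈ M, r ^ 2 * m ∈ M

/-- A prime quadratic module in `R`. -/
def IsPrimeQMR {R : Type*} [CommRing R] (N : Set R) : Prop :=
  IsQMR N ∧ (-1 : R) ∉ N ∧ ∀ a t : R, a * t ^ 2 ∈ N → a ∈ N ∨ t ∈ N ∩ (-N)

/-- `ind(N) = { A symmetric : vᵀ A v ∈ N for all v ∈ Rⁿ }`. -/
def indN {R : Type*} [CommRing R] (n : ℕ) (N : Set R) : Set (Matrix (Fin n) (Fin n) R) :=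
  {A | A.IsSymm ∧ ∀ v : Fin n → R, v ⬝ᵥ A.mulVec v ∈ N}


section QuadraticModules

variable {R : Type*} [CommRing R]

namespace IsQMR

variable {N : Set R}

def toAddSubmonoid (hN : IsQMR N) : AddSubmonoid R where
  carrier := N
  add_mem' ha hb := hN.2.1 _ ha _ hb
  zero_mem' := by simpa using hN.2.2 0 1 hN.1

theorem sum_mem (hN : IsQMR N) {ι : Type*} {s : Finset ι} {f : ι → R}
    (h : ∀ i ∈ s, f i ∈ N) : ∑ i ∈ s, f i ∈ N :=
  hN.toAddSubmonoid.sum_mem h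

theorem nsmul_mem (hN : IsQMR N) {r : R} (hr : r ∈ N) (k : ℕ) : k • r ∈ N :=
  hN.toAddSubmonoid.nsmul_mem hr k

end IsQMR

theorem IsPrimeQMR.neg_four_notMem {N : Set R} (hN : IsPrimeQMR N) : (-4 : R) ∉ N := by
  intro h
  rcases hN.2.2 (-1) 2 (by norm_num [h]) with h1 | ⟨-, h2⟩
  · exact hN.2.1 h1
  · exact hN.2.1 (by convert hN.1.2.1 1 hN.1.1 (-2) h2 using 1; norm_num)

namespace IsQM

variable {n : ℕ} {M : Set (Matrix (Fin n) (Fin n) R)}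

def toAddSubmonoid (hM : IsQM M) : AddSubmonoid (Matrix (Fin n) (Fin n) R) where
  carrier := M
  add_mem' ha hb := hM.2.2.1 _ ha _ hb
  zero_mem' := by simpa using hM.2.2.2 0 1 hM.2.1

theorem sum_mem (hM : IsQM M) {ι : Type*} {s : Finset ι} {f : ι → Matrix (Fin n) (Fin n) R}
    (h : ∀ i ∈ s, f i ∈ M) : ∑ i ∈ s, f i ∈ M :=
  hM.toAddSubmonoid.sum_mem h

end IsQM

theorem IsPrimeQM.mem_of_sq_smul_mem {n : ℕ} {M : Set (Matrix (Fin n) (Fin n) R)} {N : Set R}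
    (hM : IsPrimeQM M) (hMN : ∀ r : R, r • (1 : Matrix (Fin n) (Fin n) R) ∈ M → r ∈ N)
    {A : Matrix (Fin n) (Fin n) R} (hA : A.IsSymm) {t : R} (ht : -t ∉ N) (h : t ^ 2 • A ∈ M) :
    A ∈ M :=
  (hM.2.2 A t hA h).resolve_right fun ⟨_, hneg⟩ =>
    ht (hMN _ (by rwa [neg_smul, ← Set.mem_neg]))

section QuadraticForm

variable {ι : Type*}

def pivot (A : Matrix ι ι R) (i : ι) : Matrix ι ι R :=
  A i i • (A i i • A - vecMulVec (A i) (A i))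

theorem sq_smul_eq_pivot_add (A : Matrix ι ι R) (i : ι) :
    A i i ^ 2 • A = pivot A i + A i i • vecMulVec (A i) (A i) := by
  rw [pivot, smul_sub, smul_smul, ← sq, sub_add_cancel]

theorem pivot_apply_self (A : Matrix ι ι R) (i : ι) : pivot A i i = 0 := by
  ext y
  simp [pivot, vecMulVec_apply]

theorem pivot_apply_of_eq_zero {A : Matrix ι ι R} (hA : A.IsSymm) (i : ι) {x : ι}
    (hx : A x = 0) : pivot A i x = 0 := by
  ext y
  simp [pivot, vecMulVec_apply, hx, hA.apply x i]

variable [Fintype ι]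

theorem dotProduct_mulVec_conj (T A : Matrix ι ι R) (v : ι → R) :
    v ⬝ᵥ (Tᵀ * A * T) *ᵥ v = (T *ᵥ v) ⬝ᵥ A *ᵥ (T *ᵥ v) := by
  rw [← mulVec_mulVec, ← mulVec_mulVec, dotProduct_mulVec, vecMul_transpose]

theorem conj_vecMulVec (A : Matrix ι ι R) (v w : ι → R) :
    (vecMulVec v w)ᵀ * A * vecMulVec v w = (v ⬝ᵥ A *ᵥ v) • vecMulVec w w := by
  rw [transpose_vecMulVec, vecMulVec_mul, vecMulVec_mul_vecMulVec, vecMulVec_smul,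
    ← dotProduct_mulVec]

theorem sum_conj_vecMulVec_single [DecidableEq ι] (A : Matrix ι ι R) (v : ι → R) :
    ∑ i : ι, (vecMulVec v (Pi.single i 1))ᵀ * A * vecMulVec v (Pi.single i 1) =
      (v ⬝ᵥ A *ᵥ v) • 1 := by
  simp_rw [conj_vecMulVec, ← single_eq_single_vecMulVec_single, ← Finset.smul_sum, sum_single_one]

theorem conj_eq_pivot [DecidableEq ι] {A : Matrix ι ι R} (hA : A.IsSymm) (i : ι) :
    (A i i • 1 - vecMulVec (Pi.single i 1) (A i))ᵀ * A *
        (A i i • 1 - vecMulVec (Pi.single i 1) (A i)) = pivot A i := by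
  ext x y
  simp [pivot, mul_apply, vecMulVec_apply, Pi.single_apply, one_apply, sub_mul, mul_sub,
    Finset.sum_sub_distrib, hA.apply]
  ring

def qfRankOne (A : Matrix ι ι R) (v : ι → R) : Matrix ι ι R :=
  (v ⬝ᵥ A *ᵥ v) • vecMulVec v v

theorem eight_smul_eq_sum_qfRankOne [DecidableEq ι] {A : Matrix ι ι R} (hA : A.IsSymm) :
    (8 : R) • A = ∑ i : ι, ∑ j : ι, (qfRankOne A (Pi.single i 1 + Pi.single j 1) +
        qfRankOne A (Pi.single i 1 - Pi.single j 1)) +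
      ∑ i : ι, (-(4 * (Fintype.card ι * A i i + trace A))) •
        vecMulVec (Pi.single i 1) (Pi.single i 1) := by
  ext x y
  simp only [qfRankOne, add_dotProduct, sub_dotProduct, mulVec_add, mulVec_sub, dotProduct_add,
    dotProduct_sub, mulVec_single_one, single_one_dotProduct, col_apply, Matrix.add_apply,
    Matrix.sum_apply, Matrix.smul_apply, vecMulVec_apply, Pi.add_apply, Pi.sub_apply, smul_eq_mul]
  have expand : ∀ (i j : ι) (p q r s : R),
      (A i i + A j i + (A i j + A j j)) * ((p + q) * (r + s)) +
          (A i i - A j i - (A i j - A j j)) * ((p - q) * (r - s)) =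
        2 * (A i i + A j j) * (p * r) + 2 * (A i i + A j j) * (q * s) +
          2 * (A i j + A j i) * (p * s) + 2 * (A i j + A j i) * (q * r) := by
    intros; ring
  simp only [expand, Finset.sum_add_distrib, Pi.single_apply, mul_ite, mul_one, mul_zero,
    Finset.sum_ite_eq, Finset.mem_univ, if_true]
  rcases eq_or_ne x y with rfl | hxy
  · simp [Finset.sum_add_distrib, trace, ← Finset.mul_sum]
    ring
  · simp [hxy, hA.apply x y]
    ring

end QuadraticForm

section Induced

variable {n : ℕ} {N : Set R}

theorem smul_one_mem_indN (hN : IsQMR N) {r : R} (hr : r ∈ N) :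
    r • (1 : Matrix (Fin n) (Fin n) R) ∈ indN n N := by
  refine ⟨isSymm_one.smul r, fun v => ?_⟩
  have hqf : v ⬝ᵥ (r • 1 : Matrix (Fin n) (Fin n) R) *ᵥ v = ∑ i, v i ^ 2 * r := by
    simp only [smul_mulVec, one_mulVec, dotProduct, Pi.smul_apply, smul_eq_mul]
    exact Finset.sum_congr rfl fun _ _ => by ring
  rw [hqf]
  exact hN.sum_mem fun i _ => hN.2.2 _ _ hr

theorem mem_of_smul_one_mem_indN [NeZero n] {r : R}
    (h : r • (1 : Matrix (Fin n) (Fin n) R) ∈ indN n N) : r ∈ N := by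
  simpa [smul_mulVec] using h.2 (Pi.single 0 1)

theorem isQM_indN (hN : IsQMR N) : IsQM (indN n N) := by
  refine ⟨fun A hA => hA.1, by simpa using smul_one_mem_indN hN hN.1, ?_, ?_⟩
  · rintro A ⟨hAs, hA⟩ B ⟨hBs, hB⟩
    exact ⟨hAs.add hBs, fun v => by simpa [add_mulVec] using hN.2.1 _ (hA v) _ (hB v)⟩
  · rintro T A ⟨hAs, hA⟩
    refine ⟨?_, fun v => by simpa only [dotProduct_mulVec_conj] using hA (T *ᵥ v)⟩
    simp [IsSymm, transpose_mul, hAs.eq, Matrix.mul_assoc]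

theorem isPrimeQM_indN [NeZero n] (hN : IsPrimeQMR N) : IsPrimeQM (indN n N) := by
  refine ⟨isQM_indN hN.1, fun h => hN.2.1 (mem_of_smul_one_mem_indN (by simpa using h)), ?_⟩
  intro A r hAs hrA
  rw [or_iff_not_imp_left]
  intro hA
  obtain ⟨v, hv⟩ : ∃ v, v ⬝ᵥ A *ᵥ v ∉ N := by simpa [indN, hAs] using hA
  have hq : (v ⬝ᵥ A *ᵥ v) * r ^ 2 ∈ N := by simpa [smul_mulVec, mul_comm] using hrA.2 v
  obtain ⟨hr, hr'⟩ := (hN.2.2 _ r hq).resolve_left hv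
  exact ⟨smul_one_mem_indN hN.1 hr, by simpa [neg_smul] using smul_one_mem_indN hN.1 hr'⟩

theorem pivot_mem_indN (hN : IsQMR N) {A : Matrix (Fin n) (Fin n) R} (hA : A ∈ indN n N)
    (i : Fin n) : pivot A i ∈ indN n N := by
  rw [← conj_eq_pivot hA.1]
  exact (isQM_indN hN).2.2.2 _ _ hA

end Induced

theorem inter_range_smul_one_eq_image_iff {n : ℕ} [NeZero n] {S : Set (Matrix (Fin n) (Fin n) R)}
    {N : Set R} :
    S ∩ Set.range (fun r : R => r • (1 : Matrix (Fin n) (Fin n) R)) =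
        (fun r : R => r • (1 : Matrix (Fin n) (Fin n) R)) '' N ↔
      ∀ r : R, r • (1 : Matrix (Fin n) (Fin n) R) ∈ S ↔ r ∈ N := by
  have hinj : Function.Injective fun r : R => r • (1 : Matrix (Fin n) (Fin n) R) :=
    fun r s h => by simpa using congr_fun₂ h 0 0
  rw [← Set.image_preimage_eq_inter_range, hinj.image_injective.eq_iff, Set.ext_iff]
  rfl

section Uniqueness

variable {n : ℕ} {N : Set R} {M : Set (Matrix (Fin n) (Fin n) R)}

theorem subset_indN (hM : IsQM M)
    (hMN : ∀ r : R, r • (1 : Matrix (Fin n) (Fin n) R) ∈ M → r ∈ N) : M ⊆ indN n N := by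
  intro A hA
  refine ⟨hM.1 A hA, fun v => hMN _ ?_⟩
  rw [← sum_conj_vecMulVec_single]
  exact hM.sum_mem fun i _ => hM.2.2.2 _ A hA

theorem smul_vecMulVec_mem [NeZero n] (hM : IsQM M)
    (hNM : ∀ r ∈ N, r • (1 : Matrix (Fin n) (Fin n) R) ∈ M) {r : R} (hr : r ∈ N)
    (w : Fin n → R) : r • vecMulVec w w ∈ M := by
  have h := hM.2.2.2 (vecMulVec (Pi.single 0 1) w) _ (hNM r hr)
  rwa [conj_vecMulVec, smul_mulVec, one_mulVec, dotProduct_smul, single_one_dotProduct,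
    Pi.single_eq_same, smul_eq_mul, mul_one] at h

theorem mem_of_forall_neg_diag_mem [NeZero n] (hN : IsPrimeQMR N) (hM : IsPrimeQM M)
    (hMN : ∀ r : R, r • (1 : Matrix (Fin n) (Fin n) R) ∈ M ↔ r ∈ N)
    {A : Matrix (Fin n) (Fin n) R} (hA : A ∈ indN n N) (hdiag : ∀ i, -A i i ∈ N) : A ∈ M := by
  have hNM : ∀ r ∈ N, r • (1 : Matrix (Fin n) (Fin n) R) ∈ M := fun r => (hMN r).2
  have hcorr : ∀ i, -(4 * (Fintype.card (Fin n) * A i i + trace A)) ∈ N := by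
    intro i
    have h : -(4 * (Fintype.card (Fin n) * A i i + trace A)) =
        2 ^ 2 * (n • -A i i + ∑ k, -A k k) := by
      simp [trace, Finset.sum_neg_distrib, nsmul_eq_mul]
      ring
    rw [h]
    exact hN.1.2.2 2 _ (hN.1.2.1 _ (hN.1.nsmul_mem (hdiag i) n) _
      (hN.1.sum_mem fun k _ => hdiag k))
  have h8 : (8 : R) • A ∈ M := by
    rw [eight_smul_eq_sum_qfRankOne hA.1]
    refine hM.1.2.2.1 _ (hM.1.sum_mem fun i _ => hM.1.sum_mem fun j _ => ?_) _
      (hM.1.sum_mem fun i _ => smul_vecMulVec_mem hM.1 hNM (hcorr i) _)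
    exact hM.1.2.2.1 _ (smul_vecMulVec_mem hM.1 hNM (hA.2 _) _) _
      (smul_vecMulVec_mem hM.1 hNM (hA.2 _) _)
  refine hM.mem_of_sq_smul_mem (fun r => (hMN r).1) hA.1 hN.neg_four_notMem ?_
  have h16 : (4 : R) ^ 2 • A = (8 : R) • A + (8 : R) • A := by rw [← add_smul]; norm_num
  exact h16 ▸ hM.1.2.2.1 _ h8 _ h8

theorem indN_subset [NeZero n] (hN : IsPrimeQMR N) (hM : IsPrimeQM M)
    (hMN : ∀ r : R, r • (1 : Matrix (Fin n) (Fin n) R) ∈ M ↔ r ∈ N) : indN n N ⊆ M := by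
  suffices h : ∀ s : Finset (Fin n), ∀ A ∈ indN n N, (∀ x ∉ s, A x = 0) → A ∈ M from
    fun A hA => h Finset.univ A hA fun x hx => absurd (Finset.mem_univ x) hx
  intro s
  induction s using Finset.strongInduction with
  | H s ih =>
  intro A hA hs
  by_cases hdiag : ∀ i, -A i i ∈ N
  · exact mem_of_forall_neg_diag_mem hN hM hMN hA hdiag
  obtain ⟨i, hi⟩ := not_forall.1 hdiag
  have hii : A i i ∈ N := by simpa using hA.2 (Pi.single i 1)
  have his : i ∈ s := by
    by_contra h
    exact hi (by simpa [hs i h] using hii)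
  have hpivot : pivot A i ∈ M := by
    refine ih _ (Finset.erase_ssubset his) _ (pivot_mem_indN hN.1 hA i) fun x hx => ?_
    rcases eq_or_ne x i with rfl | hxi
    · exact pivot_apply_self A x
    · exact pivot_apply_of_eq_zero hA.1 i (hs x fun h => hx (Finset.mem_erase.2 ⟨hxi, h⟩))
  refine hM.mem_of_sq_smul_mem (fun r => (hMN r).1) hA.1 hi ?_
  rw [sq_smul_eq_pivot_add]
  exact hM.1.2.2.1 _ hpivot _ (smul_vecMulVec_mem hM.1 (fun r => (hMN r).2) hii _)

end Uniqueness

end QuadraticModules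

theorem stmt13 {n : ℕ} [NeZero n] {R : Type*} [CommRing R] (N : Set R) (hN : IsPrimeQMR N) :
    IsPrimeQM (indN n N) ∧
      (indN n N) ∩ (Set.range fun r : R => r • (1 : Matrix (Fin n) (Fin n) R)) =
        (fun r : R => r • (1 : Matrix (Fin n) (Fin n) R)) '' N ∧
      ∀ M : Set (Matrix (Fin n) (Fin n) R), IsPrimeQM M →
        M ∩ (Set.range fun r : R => r • (1 : Matrix (Fin n) (Fin n) R)) =
          (fun r : R => r • (1 : Matrix (Fin n) (Fin n) R)) '' N →
        M = indN n N := by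
  refine ⟨isPrimeQM_indN hN, inter_range_smul_one_eq_image_iff.2 fun r =>
    ⟨mem_of_smul_one_mem_indN, smul_one_mem_indN hN.1⟩, fun M hM hMN => ?_⟩
  rw [inter_range_smul_one_eq_image_iff] at hMN
  exact (subset_indN hM.1 fun r => (hMN r).1).antisymm (indN_subset hN hM hMN)
end
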